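/- arXiv:1708.04311 — 4 statements merged into one kernel-verified Lean document; each statement's English description precedes it below -/
import Mathlib

section
/- For the concatenation of two bracket sequences s and t, the reduced form of s ++ t can be computed from the reduced forms of s and t: if red(s) = )^a (^b and red(t) = )^c (^d, then red(s ++ t) = )^(a + max(c - b, 0)) (^(d + max(b - c, 0)). -/
/-!
Reduction steps are stable under concatenation on either side, so `s ++ t` reduces to
`)^a (^b )^c (^d`; the inner block `(^b )^c` then cancels innermost pairs down to
`)^(c-b) (^(b-c)`.
-/

/-- Brackets: `true` is a left bracket `(`, `false` is a right bracket `)`. -/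
inductive BStep : List Bool → List Bool → Prop
  | mk (a b : List Bool) : BStep (a ++ [true, false] ++ b) (a ++ b)

open List Relation

namespace BStep

theorem append_left (l : List Bool) {x y : List Bool} (h : BStep x y) :
    BStep (l ++ x) (l ++ y) := by
  obtain ⟨a, b⟩ := h
  simpa only [append_assoc] using mk (l ++ a) b

theorem append_right (r : List Bool) {x y : List Bool} (h : BStep x y) :
    BStep (x ++ r) (y ++ r) := by
  obtain ⟨a, b⟩ := h
  simpa only [append_assoc] using mk a (b ++ r)

theorem reflTransGen_append {x x' y y' : List Bool} (hx : ReflTransGen BStep x x')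
    (hy : ReflTransGen BStep y y') : ReflTransGen BStep (x ++ y) (x' ++ y') :=
  (hx.lift (· ++ y) fun _ _ h => h.append_right y).trans
    (hy.lift (x' ++ ·) fun _ _ h => h.append_left x')

theorem replicate_succ_true_append_replicate_succ_false (b c : ℕ) :
    BStep (replicate (b + 1) true ++ replicate (c + 1) false)
      (replicate b true ++ replicate c false) := by
  rw [replicate_succ', replicate_succ]
  simpa only [append_assoc, cons_append, nil_append] using mk (replicate b true) (replicate c false)

theorem reflTransGen_replicate_true_append_replicate_false : ∀ b c : ℕ,
    ReflTransGen BStep (replicate b true ++ replicate c false)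
      (replicate (c - b) false ++ replicate (b - c) true)
  | 0, c => by simp [ReflTransGen.refl]
  | b + 1, 0 => by simp [ReflTransGen.refl]
  | b + 1, c + 1 => by
    simpa only [Nat.add_sub_add_right] using
      .head (replicate_succ_true_append_replicate_succ_false b c)
        (reflTransGen_replicate_true_append_replicate_false b c)

end BStep

/-- If `red(s) = )^a (^b` and `red(t) = )^c (^d`, then
`red(s ++ t) = )^(a + max(c-b,0)) (^(d + max(b-c,0))` (truncated subtraction on `ℕ`). -/
theorem bracket_reduction_append (s t : List Bool) (a b c d : ℕ)
    (hs : Relation.ReflTransGen BStep s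
      (List.replicate a false ++ List.replicate b true))
    (ht : Relation.ReflTransGen BStep t
      (List.replicate c false ++ List.replicate d true)) :
    Relation.ReflTransGen BStep (s ++ t)
      (List.replicate (a + (c - b)) false ++ List.replicate (d + (b - c)) true) := by
  calc ReflTransGen BStep (s ++ t)
        ((replicate a false ++ replicate b true) ++ (replicate c false ++ replicate d true)) :=
        BStep.reflTransGen_append hs ht
    _ = replicate a false ++ (replicate b true ++ replicate c false) ++ replicate d true := by
        simp only [append_assoc]
    ReflTransGen BStep _
        (replicate a false ++ (replicate (c - b) false ++ replicate (b - c) true) ++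
          replicate d true) :=
        BStep.reflTransGen_append (BStep.reflTransGen_append .refl
          (BStep.reflTransGen_replicate_true_append_replicate_false b c)) .refl
    _ = replicate (a + (c - b)) false ++ replicate (d + (b - c)) true := by
        simp only [replicate_add, append_assoc, Nat.add_comm d]
end

section
/- For a bracket sequence s, the number of right brackets in red(s) equals max over prefixes p of s of (number of ')' in p minus number of '(' in p), and the number of left brackets in red(s) equals max over suffixes q of s of (number of '(' in q minus number of ')' in q). -/
namespace BracketAux

/-- Integer weight of a bracket: `(` is `-1`, `)` is `+1`. -/
def delta (b : Bool) : ℤ := if b then -1 else 1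

/-- Recursive form of the prefix maximum of `#')' - #'('`. -/
def Fz : List Bool → ℤ
  | [] => 0
  | b :: s => max 0 (delta b + Fz s)

lemma Fz_nonneg (s : List Bool) : 0 ≤ Fz s := by
  cases s <;> simp [Fz]

lemma Fz_cons (b : Bool) (s : List Bool) : Fz (b :: s) = max 0 (delta b + Fz s) := rfl

lemma delta_true : delta true = -1 := rfl
lemma delta_false : delta false = 1 := rfl

lemma Fz_cancel (a b : List Bool) :
    Fz (a ++ [true, false] ++ b) = Fz (a ++ b) := by
  induction a with
  | nil =>
      have hb := Fz_nonneg b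
      rw [List.nil_append, List.cons_append, List.cons_append, Fz_cons, Fz_cons]
      rw [delta_true, delta_false, List.nil_append]
      omega
  | cons x a ih =>
      rw [List.cons_append, List.cons_append, List.cons_append, Fz_cons, Fz_cons, ih]

lemma Fz_bstep {s t : List Bool} (h : BStep s t) : Fz s = Fz t := by
  cases h with
  | mk a b => exact Fz_cancel a b

lemma Fz_rtg {s t : List Bool} (h : Relation.ReflTransGen BStep s t) :
    Fz s = Fz t := by
  induction h with
  | refl => rfl
  | tail _ hst ih => exact ih.trans (Fz_bstep hst)

lemma Fz_true (l : ℕ) : Fz (List.replicate l true) = 0 := by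
  induction l with
  | zero => rfl
  | succ l ih => simp [List.replicate_succ, Fz, ih, delta]

lemma Fz_norm (r l : ℕ) :
    Fz (List.replicate r false ++ List.replicate l true) = r := by
  induction r with
  | zero => simp [Fz_true]
  | succ r ih =>
      have h0 : (0:ℤ) ≤ r := by positivity
      rw [List.replicate_succ, List.cons_append, Fz_cons, ih, delta_false]
      push_cast
      omega

/-- prefix values in `ℤ`. -/
def vz (p : List Bool) : ℤ := (p.count false : ℤ) - p.count true

lemma vz_cons (b : Bool) (p : List Bool) : vz (b :: p) = delta b + vz p := by
  cases b <;> simp [vz, delta, List.count_cons] <;> push_cast <;> ring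

lemma fold_inits (t : List Bool) :
    ∀ c : ℤ, ((t.inits.map (fun p => c + vz p)).foldr max 0) = max (c + Fz t) 0 := by
  induction t with
  | nil => intro c; simp [vz, Fz]
  | cons b t ih =>
      intro c
      rw [List.inits_cons]
      simp only [List.map_cons, List.map_map, List.foldr_cons]
      have : (List.map ((fun p => c + vz p) ∘ fun t => b :: t) t.inits)
          = List.map (fun p => (c + delta b) + vz p) t.inits := by
        apply List.map_congr_left
        intro p _
        simp [Function.comp, vz_cons]; ring
      rw [this, ih (c + delta b)]
      have h : vz ([] : List Bool) = 0 := by simp [vz]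
      rw [h]
      simp only [Fz]
      omega

lemma fold_inits_z (t : List Bool) :
    ((t.inits.map vz).foldr max 0) = Fz t := by
  have h := fold_inits t 0
  simp only [zero_add] at h
  rw [h]
  have := Fz_nonneg t
  omega

lemma foldr_max_toNat (L : List ℤ) :
    (L.map Int.toNat).foldr max 0 = (L.foldr max 0).toNat := by
  induction L with
  | nil => rfl
  | cons a L ih => simp only [List.map_cons, List.foldr_cons, ih]; omega

/-- The `ℕ` prefix-max expression equals `(Fz s).toNat`. -/
lemma nat_inits_eq (s : List Bool) :
    (s.inits.map (fun p => p.count false - p.count true)).foldr max 0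
      = (Fz s).toNat := by
  have h1 : (s.inits.map (fun p => p.count false - p.count true))
      = (s.inits.map vz).map Int.toNat := by
    rw [List.map_map]
    apply List.map_congr_left
    intro p _
    simp only [vz, Function.comp]
    omega
  rw [h1, foldr_max_toNat, fold_inits_z]

/-- The transform `s ↦ (s.reverse).map not`. -/
def T (s : List Bool) : List Bool := s.reverse.map not

lemma T_append (a b : List Bool) : T (a ++ b) = T b ++ T a := by
  simp [T]

lemma T_bstep {s t : List Bool} (h : BStep s t) : BStep (T s) (T t) := by
  cases h with
  | mk a b =>
      have h1 : T (a ++ [true, false] ++ b) = T b ++ [true, false] ++ T a := by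
        simp [T]
      rw [h1, T_append]
      exact BStep.mk (T b) (T a)

lemma T_rtg {s t : List Bool} (h : Relation.ReflTransGen BStep s t) :
    Relation.ReflTransGen BStep (T s) (T t) := by
  induction h with
  | refl => exact Relation.ReflTransGen.refl
  | tail _ hst ih => exact ih.tail (T_bstep hst)

lemma count_map_not_true (q : List Bool) : (q.map not).count true = q.count false := by
  induction q with
  | nil => rfl
  | cons a q ih => cases a <;> simp [List.count_cons, ih]

lemma count_map_not_false (q : List Bool) : (q.map not).count false = q.count true := by
  induction q with
  | nil => rfl
  | cons a q ih => cases a <;> simp [List.count_cons, ih]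

lemma tails_eq (s : List Bool) :
    (s.tails.map (fun q => q.count true - q.count false)).foldr max 0
      = ((T s).inits.map (fun p => p.count false - p.count true)).foldr max 0 := by
  have h1 : (T s).inits = (s.tails.map T).reverse := by
    show (List.map not s.reverse).inits = _
    rw [List.map_reverse, List.inits_reverse, List.map_tails, List.map_map]
    congr 1
    apply List.map_congr_left
    intro q _
    simp [T, Function.comp, List.map_reverse]
  rw [h1, ← List.map_reverse, List.map_map]
  have h2 : ((fun p => p.count false - p.count true) ∘ T)
      = fun q => q.count true - q.count false := by
    funext q
    simp [Function.comp, T, count_map_not_true, count_map_not_false, List.count_reverse]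
  rw [h2]
  exact (((List.reverse_perm _).map _).foldr_eq 0).symm

end BracketAux

/-- If `red(s) = )^r (^l`, then `r` is the maximum over prefixes `p` of `s` of
`#')'(p) - #'('(p)`, and `l` is the maximum over suffixes `q` of `s` of
`#'('(q) - #')'(q)` (truncated subtraction on `ℕ`). -/
theorem bracket_reduction_counts (s : List Bool) (r l : ℕ)
    (h : Relation.ReflTransGen BStep s
      (List.replicate r false ++ List.replicate l true)) :
    r = (s.inits.map (fun p => p.count false - p.count true)).foldr max 0 ∧
    l = (s.tails.map (fun q => q.count true - q.count false)).foldr max 0 := by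
  open BracketAux in
  constructor
  · rw [nat_inits_eq, Fz_rtg h, Fz_norm]
    simp
  · rw [tails_eq, nat_inits_eq, Fz_rtg (T_rtg h)]
    have hT : T (List.replicate r false ++ List.replicate l true)
        = List.replicate l false ++ List.replicate r true := by
      simp [T, List.map_replicate]
    rw [hT, Fz_norm]
    simp
end

section
/- The map Ψ from marginally large tableaux of type C_n to Kostant partitions is weight-preserving: for every marginally large tableau T, the weight of T (the sum of the assigned negative root weights of all unshaded boxes) equals the weight of Ψ(T) (negative of the sum, with multiplicity, of the positive roots in the Kostant partition Ψ(T)). -/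
/-- The standard basis vector `ε_i` of `ℝ^∞` (we realize `ℝ^n` inside `ℕ → ℝ`). -/
noncomputable def eps (i : ℕ) : ℕ → ℝ := Pi.single i 1

/-- Type `C_n`: `β_{j,k} = ε_j - ε_{k+1}`. -/
noncomputable def betaC (j k : ℕ) : ℕ → ℝ := eps j - eps (k + 1)

/-- Type `C_n`: `γ_{j,k} = ε_j + ε_k`. -/
noncomputable def gammaC (j k : ℕ) : ℕ → ℝ := eps j + eps k

/-- Weight of row `j` of a type `C_n` marginally large tableau: `u k` is the number of
unshaded boxes with entry `k` (for `j < k ≤ n`) and `ub k` is the number of boxes with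
entry `k̄` (for `j ≤ k ≤ n`); a box `k` has weight `-β_{j,k-1}` and a box `k̄` has
weight `-γ_{j,k}`. -/
noncomputable def wtRowC (n j : ℕ) (u ub : ℕ → ℕ) : ℕ → ℝ :=
  ∑ k ∈ Finset.Icc (j + 1) n, (u k : ℝ) • (-betaC j (k - 1))
    + ∑ k ∈ Finset.Icc j n, (ub k : ℝ) • (-gammaC j k)

/-- The Kostant partition `Ψ(R_j)` (for `j < n`), recorded as the sum of its positive
roots with multiplicity: each pair `(n, n̄)` gives `γ_{j,j}`; each `j̄` gives
`β_{j,j} + γ_{j,j+1}`; each pair `(k, k̄)` with `j < k < n` gives `β_{j,k} + γ_{j,k+1}`;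
each unpaired `k` gives `β_{j,k-1}`; each unpaired `k̄` gives `γ_{j,k}`. -/
noncomputable def psiRowC (n j : ℕ) (u ub : ℕ → ℕ) : ℕ → ℝ :=
  ((min (u n) (ub n) : ℕ) : ℝ) • gammaC j j
    + ((u n - min (u n) (ub n) : ℕ) : ℝ) • betaC j (n - 1)
    + ((ub n - min (u n) (ub n) : ℕ) : ℝ) • gammaC j n
    + ((ub j : ℕ) : ℝ) • (betaC j j + gammaC j (j + 1))
    + ∑ k ∈ Finset.Icc (j + 1) (n - 1),
        (((min (u k) (ub k) : ℕ) : ℝ) • (betaC j k + gammaC j (k + 1))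
          + ((u k - min (u k) (ub k) : ℕ) : ℝ) • betaC j (k - 1)
          + ((ub k - min (u k) (ub k) : ℕ) : ℝ) • gammaC j k)

/-- `β_{j,k} + γ_{j,k+1} = γ_{j,j}` (both equal `2ε_j`). -/
lemma pair_eq (j k : ℕ) : betaC j k + gammaC j (k + 1) = gammaC j j := by
  unfold betaC gammaC; abel

/-- For `k ≥ 1`, `γ_{j,j} = β_{j,k-1} + γ_{j,k}`. -/
lemma gamma_eq (j k : ℕ) (hk : 1 ≤ k) : gammaC j j = betaC j (k - 1) + gammaC j k := by
  unfold betaC gammaC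
  have h : k - 1 + 1 = k := by omega
  rw [h]
  abel

lemma key (a b : ℕ) (v w : ℕ → ℝ) :
    ((min a b : ℕ) : ℝ) • (v + w) + ((a - min a b : ℕ) : ℝ) • v
      + ((b - min a b : ℕ) : ℝ) • w = (a : ℝ) • v + (b : ℝ) • w := by
  rw [Nat.cast_sub (min_le_left a b), Nat.cast_sub (min_le_right a b)]
  module

lemma rowC (n j : ℕ) (hj : j + 1 ≤ n) (u ub : ℕ → ℕ) :
    wtRowC n j u ub = -psiRowC n j u ub := by
  have hn1 : n - 1 + 1 = n := by omega
  unfold wtRowC psiRowC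
  have hA : ∑ k ∈ Finset.Icc (j + 1) n, (u k : ℝ) • (-betaC j (k - 1))
      = ∑ k ∈ Finset.Icc (j + 1) (n - 1), (u k : ℝ) • (-betaC j (k - 1))
        + (u n : ℝ) • (-betaC j (n - 1)) := by
    rw [← hn1]
    exact Finset.sum_Icc_succ_top (by omega) _
  have hB : ∑ k ∈ Finset.Icc j n, (ub k : ℝ) • (-gammaC j k)
      = (ub j : ℝ) • (-gammaC j j)
        + (∑ k ∈ Finset.Icc (j + 1) (n - 1), (ub k : ℝ) • (-gammaC j k)
          + (ub n : ℝ) • (-gammaC j n)) := by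
    rw [Finset.Icc_eq_cons_Ioc (show j ≤ n by omega), Finset.sum_cons, ← Finset.Icc_add_one_left_eq_Ioc]
    congr 1
    rw [← hn1]
    exact Finset.sum_Icc_succ_top (by omega) _
  rw [hA, hB]
  have hS : ∑ k ∈ Finset.Icc (j + 1) (n - 1),
        (((min (u k) (ub k) : ℕ) : ℝ) • (betaC j k + gammaC j (k + 1))
          + ((u k - min (u k) (ub k) : ℕ) : ℝ) • betaC j (k - 1)
          + ((ub k - min (u k) (ub k) : ℕ) : ℝ) • gammaC j k)
      = ∑ k ∈ Finset.Icc (j + 1) (n - 1),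
          ((u k : ℝ) • betaC j (k - 1) + (ub k : ℝ) • gammaC j k) := by
    apply Finset.sum_congr rfl
    intro k hk
    have hk1 : 1 ≤ k := by
      have := (Finset.mem_Icc.mp hk).1; omega
    rw [pair_eq, gamma_eq j k hk1, key]
  have hN : ((min (u n) (ub n) : ℕ) : ℝ) • gammaC j j
      + ((u n - min (u n) (ub n) : ℕ) : ℝ) • betaC j (n - 1)
      + ((ub n - min (u n) (ub n) : ℕ) : ℝ) • gammaC j n
      = (u n : ℝ) • betaC j (n - 1) + (ub n : ℝ) • gammaC j n := by
    rw [gamma_eq j n (show 1 ≤ n by omega)]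
    exact key _ _ _ _
  have hJ : ((ub j : ℕ) : ℝ) • (betaC j j + gammaC j (j + 1))
      = (ub j : ℝ) • gammaC j j := by rw [pair_eq]
  rw [hS, hN, hJ, Finset.sum_add_distrib]
  simp only [smul_neg, Finset.sum_neg_distrib]
  abel

lemma rowN (n : ℕ) (hn : 1 ≤ n) (u ub : ℕ → ℕ) :
    wtRowC n n u ub = -((ub n : ℝ) • gammaC n n) := by
  unfold wtRowC
  rw [(Finset.Icc_eq_empty (by omega) : Finset.Icc (n + 1) n = ∅), Finset.sum_empty,
    Finset.Icc_self, Finset.sum_singleton, smul_neg]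
  abel

/-- `Ψ` is weight preserving in type `C_n`:  the weight of a marginally large tableau
(the sum of weights of its unshaded boxes) equals the weight of the Kostant partition
`Ψ(T)` (minus the sum of its positive roots with multiplicity); row `n` contributes
`(ub n n)` copies of `γ_{n,n}` to `Ψ(T)`. -/
theorem psi_weight_preserving_C (n : ℕ) (hn : 1 ≤ n) (u ub : ℕ → ℕ → ℕ)
    (hu : ∀ j k, u j k ≠ 0 → 1 ≤ j ∧ j < k ∧ k ≤ n)
    (hub : ∀ j k, ub j k ≠ 0 → 1 ≤ j ∧ j ≤ k ∧ k ≤ n) :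
    ∑ j ∈ Finset.Icc 1 n, wtRowC n j (u j) (ub j)
      = -(∑ j ∈ Finset.Icc 1 (n - 1), psiRowC n j (u j) (ub j)
          + ((ub n n : ℕ) : ℝ) • gammaC n n) := by
  have hn1 : n - 1 + 1 = n := by omega
  have hsplit : ∑ j ∈ Finset.Icc 1 n, wtRowC n j (u j) (ub j)
      = ∑ j ∈ Finset.Icc 1 (n - 1), wtRowC n j (u j) (ub j)
        + wtRowC n n (u n) (ub n) := by
    rw [← hn1]
    exact Finset.sum_Icc_succ_top (by omega) _
  rw [hsplit, rowN n hn, Finset.sum_congr rfl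
    (fun j hj => rowC n j (by have := (Finset.mem_Icc.mp hj).2; omega) (u j) (ub j))]
  rw [Finset.sum_neg_distrib]
  abel
end

section
/- The map Ψ from marginally large tableaux of type B_n to Kostant partitions is weight-preserving: for every marginally large tableau T, wt(T) = wt(Ψ(T)). -/
/-- Type `B_n`: `β_{j,k} = ε_j - ε_{k+1}` for `k < n`, and `β_{j,n} = ε_j`. -/
noncomputable def betaB (n j k : ℕ) : ℕ → ℝ :=
  if k = n then eps j else eps j - eps (k + 1)

/-- Type `B_n`: `γ_{j,k} = ε_j + ε_k`. -/
noncomputable def gammaB (j k : ℕ) : ℕ → ℝ := eps j + eps k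

/-- Weight of row `j` of a type `B_n` marginally large tableau: `u k` boxes with entry
`k` (`j < k ≤ n`, weight `-β_{j,k-1}`), `z` boxes `0` (weight `-β_{j,n}`), `ub k`
boxes `k̄` (`j < k ≤ n`, weight `-γ_{j,k}`), and `b` boxes `j̄` (weight `-2β_{j,n}`). -/
noncomputable def wtRowB (n j : ℕ) (u : ℕ → ℕ) (z : ℕ) (ub : ℕ → ℕ) (b : ℕ) :
    ℕ → ℝ :=
  ∑ k ∈ Finset.Icc (j + 1) n, (u k : ℝ) • (-betaB n j (k - 1))
    + (z : ℝ) • (-betaB n j n)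
    + ∑ k ∈ Finset.Icc (j + 1) n, (ub k : ℝ) • (-gammaB j k)
    + (b : ℝ) • (-((2 : ℝ) • betaB n j n))

/-- The Kostant partition `Ψ(R_j)` (for `j < n`) as a sum of positive roots with
multiplicity: each pair `(n, n̄)` gives `2β_{j,n}`; each `0` gives `β_{j,n}`; each `j̄`
gives `β_{j,j} + γ_{j,j+1}`; each pair `(k, k̄)` with `j < k < n` gives
`β_{j,k} + γ_{j,k+1}`; each unpaired `k` gives `β_{j,k-1}`; each unpaired `k̄` gives
`γ_{j,k}`. -/
noncomputable def psiRowB (n j : ℕ) (u : ℕ → ℕ) (z : ℕ) (ub : ℕ → ℕ) (b : ℕ) :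
    ℕ → ℝ :=
  ((2 * min (u n) (ub n) + z : ℕ) : ℝ) • betaB n j n
    + ((u n - min (u n) (ub n) : ℕ) : ℝ) • betaB n j (n - 1)
    + ((ub n - min (u n) (ub n) : ℕ) : ℝ) • gammaB j n
    + ((b : ℕ) : ℝ) • (betaB n j j + gammaB j (j + 1))
    + ∑ k ∈ Finset.Icc (j + 1) (n - 1),
        (((min (u k) (ub k) : ℕ) : ℝ) • (betaB n j k + gammaB j (k + 1))
          + ((u k - min (u k) (ub k) : ℕ) : ℝ) • betaB n j (k - 1)
          + ((ub k - min (u k) (ub k) : ℕ) : ℝ) • gammaB j k)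

lemma termB_aux (n j k : ℕ) (hk : j + 1 ≤ k) (hkn : k ≤ n - 1) (hjn : j < n)
    (uk ubk : ℕ) :
    (uk : ℝ) • (-betaB n j (k - 1)) + (ubk : ℝ) • (-gammaB j k)
      + (((min uk ubk : ℕ)) : ℝ) • (betaB n j k + gammaB j (k + 1))
      + ((uk - min uk ubk : ℕ) : ℝ) • betaB n j (k - 1)
      + ((ubk - min uk ubk : ℕ) : ℝ) • gammaB j k = 0 := by
  have hk1 : k - 1 + 1 = k := by omega
  have e1 : betaB n j (k - 1) = eps j - eps k := by
    rw [betaB, if_neg (by omega), hk1]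
  have e2 : betaB n j k = eps j - eps (k + 1) := by
    rw [betaB, if_neg (by omega)]
  rw [e1, e2, gammaB, gammaB,
    Nat.cast_sub (Nat.min_le_left _ _), Nat.cast_sub (Nat.min_le_right _ _)]
  push_cast
  module

lemma topB_aux (n j : ℕ) (hjn : j < n) (un ubn z b : ℕ) :
    (un : ℝ) • (-betaB n j (n - 1)) + (z : ℝ) • (-betaB n j n)
      + (ubn : ℝ) • (-gammaB j n) + (b : ℝ) • (-((2 : ℝ) • betaB n j n))
      + ((2 * min un ubn + z : ℕ) : ℝ) • betaB n j n
      + ((un - min un ubn : ℕ) : ℝ) • betaB n j (n - 1)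
      + ((ubn - min un ubn : ℕ) : ℝ) • gammaB j n
      + (b : ℝ) • (betaB n j j + gammaB j (j + 1)) = 0 := by
  have hn1 : n - 1 + 1 = n := by omega
  have e1 : betaB n j (n - 1) = eps j - eps n := by
    rw [betaB, if_neg (by omega), hn1]
  have e2 : betaB n j n = eps j := if_pos rfl
  have e3 : betaB n j j = eps j - eps (j + 1) := by
    rw [betaB, if_neg (by omega)]
  rw [e1, e2, e3, gammaB, gammaB,
    Nat.cast_sub (Nat.min_le_left _ _), Nat.cast_sub (Nat.min_le_right _ _)]
  push_cast
  module

lemma rowB_eq (n j : ℕ) (hjn : j < n) (u : ℕ → ℕ) (z : ℕ) (ub : ℕ → ℕ) (b : ℕ) :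
    wtRowB n j u z ub b = -(psiRowB n j u z ub b) := by
  have hn1 : n - 1 + 1 = n := by omega
  have hsplit : ∀ f : ℕ → (ℕ → ℝ),
      ∑ k ∈ Finset.Icc (j + 1) n, f k
        = ∑ k ∈ Finset.Icc (j + 1) (n - 1), f k + f n := by
    intro f
    conv_lhs => rw [← hn1]
    rw [Finset.sum_Icc_succ_top (by omega), hn1]
  rw [eq_neg_iff_add_eq_zero, wtRowB, psiRowB, hsplit, hsplit]
  have hS : ∑ k ∈ Finset.Icc (j + 1) (n - 1), ((u k : ℝ) • (-betaB n j (k - 1)))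
      + ∑ k ∈ Finset.Icc (j + 1) (n - 1), ((ub k : ℝ) • (-gammaB j k))
      + ∑ k ∈ Finset.Icc (j + 1) (n - 1),
          (((min (u k) (ub k) : ℕ) : ℝ) • (betaB n j k + gammaB j (k + 1))
            + ((u k - min (u k) (ub k) : ℕ) : ℝ) • betaB n j (k - 1)
            + ((ub k - min (u k) (ub k) : ℕ) : ℝ) • gammaB j k) = 0 := by
    rw [← Finset.sum_add_distrib, ← Finset.sum_add_distrib]
    refine Finset.sum_eq_zero fun k hk => ?_
    simp only [Finset.mem_Icc] at hk
    have := termB_aux n j k hk.1 hk.2 hjn (u k) (ub k)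
    linear_combination this
  have hT := topB_aux n j hjn (u n) (ub n) z b
  linear_combination hS + hT

/-- `Ψ` is weight preserving in type `B_n`: the weight of a marginally large tableau
equals the weight of the Kostant partition `Ψ(T)`; row `n` contributes `2(b n) + z n`
copies of `β_{n,n}` to `Ψ(T)`. -/
theorem psi_weight_preserving_B (n : ℕ) (hn : 1 ≤ n)
    (u ub : ℕ → ℕ → ℕ) (z b : ℕ → ℕ)
    (hz : ∀ j, z j ≤ 1)
    (hu : ∀ j k, u j k ≠ 0 → 1 ≤ j ∧ j < k ∧ k ≤ n)
    (hub : ∀ j k, ub j k ≠ 0 → 1 ≤ j ∧ j < k ∧ k ≤ n) :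
    ∑ j ∈ Finset.Icc 1 n, wtRowB n j (u j) (z j) (ub j) (b j)
      = -(∑ j ∈ Finset.Icc 1 (n - 1), psiRowB n j (u j) (z j) (ub j) (b j)
          + ((2 * b n + z n : ℕ) : ℝ) • betaB n n n) := by
  have hn1 : n - 1 + 1 = n := by omega
  have hrown : wtRowB n n (u n) (z n) (ub n) (b n)
      = -(((2 * b n + z n : ℕ) : ℝ) • betaB n n n) := by
    rw [wtRowB, Finset.Icc_eq_empty (by omega)]
    simp only [Finset.sum_empty]
    rw [show betaB n n n = eps n from if_pos rfl]
    push_cast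
    module
  have hsplit : ∑ j ∈ Finset.Icc 1 n, wtRowB n j (u j) (z j) (ub j) (b j)
      = ∑ j ∈ Finset.Icc 1 (n - 1), wtRowB n j (u j) (z j) (ub j) (b j)
        + wtRowB n n (u n) (z n) (ub n) (b n) := by
    conv_lhs => rw [← hn1]
    rw [Finset.sum_Icc_succ_top (by omega), hn1]
  rw [hsplit, hrown,
    Finset.sum_congr rfl fun j hj => rowB_eq n j
      (by simp only [Finset.mem_Icc] at hj; omega) (u j) (z j) (ub j) (b j),
    Finset.sum_neg_distrib]
  rw [neg_add]
end
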